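/- In the hypersurface case c = 1, the endomorphism D = τ + σ₁ of the total Taylor module T = ⊕_{k=0}^{r} T_k (the free Q-module with basis {ε_S : S ⊆ {1,…,r}}) satisfies D² = a₁ · id_T; in particular, the restrictions of D between the even part ⊕_{|S| even} Q ε_S and the odd part ⊕_{|S| odd} Q ε_S form a matrix factorization of a₁. -/

import Mathlib

open MvPolynomial

/-- The position `p_{t,S}` of `t` in `S ∪ {t}`: one plus the number of elements of `S`
smaller than `t`. -/
def taylorPos {r : ℕ} (S : Finset (Fin r)) (t : Fin r) : ℕ :=
  (S.filter fun s => s < t).card + 1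

variable (𝕜 : Type*) [Field 𝕜] {n r : ℕ}

/-- `m_S`: the lcm of the monomials `m_j = x^{v j}` for `j ∈ S` (equal to `1` when `S = ∅`). -/
noncomputable def taylorLcm (v : Fin r → (Fin n →₀ ℕ)) (S : Finset (Fin r)) :
    MvPolynomial (Fin n) 𝕜 :=
  monomial (S.sup v) 1

/-- The matrix entry of the Taylor differential: `(-1)^{k-i} m_S / m_{S∖{s}}`
(where `i = p_{s,S}` is the position of `s` in `S` and `k = |S|`). -/
noncomputable def taylorEntry (v : Fin r → (Fin n →₀ ℕ)) (S : Finset (Fin r)) (s : Fin r) :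
    MvPolynomial (Fin n) 𝕜 :=
  (-1) ^ (S.card - taylorPos S s) * monomial (S.sup v - (S.erase s).sup v) 1

/-- The matrix entry of the homotopy `σ`:
`(-1)^{k - p_{t,S} - 1} f_t m_t m_S / m_{S ∪ {t}}` (where `k = |S|`); the sign is written as
`(-1)^{k + p_{t,S} + 1}`, which agrees with `(-1)^{k - p_{t,S} - 1}` since the exponents have
the same parity. -/
noncomputable def htpyEntry (v : Fin r → (Fin n →₀ ℕ)) (f : Fin r → MvPolynomial (Fin n) 𝕜)
    (S : Finset (Fin r)) (t : Fin r) : MvPolynomial (Fin n) 𝕜 :=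
  (-1) ^ (S.card + taylorPos S t + 1) *
    (f t * monomial (v t + S.sup v - (insert t S).sup v) 1)

/-- The total module of the Taylor complex: the free `Q`-module with basis
`{ε_S : S ⊆ {1,…,r}}`; the basis element `ε_S` is `Finsupp.single S 1`. -/
abbrev TaylorModule (n r : ℕ) := Finset (Fin r) →₀ MvPolynomial (Fin n) 𝕜

/-- The Taylor differential `τ` on the total module,
`τ(ε_S) = Σ_{s ∈ S} (-1)^{|S| - p_{s,S}} (m_S / m_{S∖{s}}) ε_{S∖{s}}`. -/
noncomputable def taylorTau (v : Fin r → (Fin n →₀ ℕ)) :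
    TaylorModule 𝕜 n r →ₗ[MvPolynomial (Fin n) 𝕜] TaylorModule 𝕜 n r :=
  Finsupp.lsum (MvPolynomial (Fin n) 𝕜) fun S =>
    LinearMap.toSpanSingleton _ _
      (∑ s ∈ S, Finsupp.single (S.erase s) (taylorEntry 𝕜 v S s))

/-- The homotopy `σ` attached to a coefficient family `f` (with `a = Σ_j f_j m_j`):
`σ(ε_S) = Σ_{t ∉ S} (-1)^{|S| - p_{t,S} - 1} (f_t m_t m_S / m_{S∪{t}}) ε_{S∪{t}}`. -/
noncomputable def taylorHtpy (v : Fin r → (Fin n →₀ ℕ)) (f : Fin r → MvPolynomial (Fin n) 𝕜) :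
    TaylorModule 𝕜 n r →ₗ[MvPolynomial (Fin n) 𝕜] TaylorModule 𝕜 n r :=
  Finsupp.lsum (MvPolynomial (Fin n) 𝕜) fun S =>
    LinearMap.toSpanSingleton _ _
      (∑ t ∈ Sᶜ, Finsupp.single (insert t S) (htpyEntry 𝕜 v f S t))

/-! Write `D = τ + σ`, so that `D² = τ² + (τσ + στ) + σ²`. An entry of `τ` or `σ` is a sign
times a quotient of lcm's (times `f_t` for `σ`), and these quotients telescope: the product of the
entries along a path `S → S'' → S'` depends on its middle vertex `S''` only through the sign.
Removing (or adding) two indices in the two possible orders gives opposite signs, so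
`τ² = σ² = 0`; the same happens in `τσ + στ` for the two paths that remove `s` and add `t ≠ s`.
The remaining paths of `τσ + στ` leave `S` through one index `t` and come back, contributing
`f_t m_t` each, so that `τσ + στ = a₁`. -/

theorem tsub_add_add_tsub_cancel {α : Type*} [AddCommMonoid α] [PartialOrder α]
    [CanonicallyOrderedAdd α] [Sub α] [OrderedSub α] [AddLeftReflectLE α] {a b c d : α}
    (hba : b ≤ a) (hd : d ≤ c + b) : a - b + (c + b - d) = a + c - d := by
  obtain ⟨a, rfl⟩ := le_iff_exists_add.1 hba
  rw [add_tsub_cancel_left, ← add_tsub_assoc_of_le hd, add_assoc, add_comm c, add_left_comm]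

theorem MvPolynomial.monomial_one_mul_monomial_one {σ R : Type*} [CommSemiring R]
    {e₁ e₂ e : σ →₀ ℕ} (h : e₁ + e₂ = e) :
    monomial e₁ (1 : R) * monomial e₂ 1 = monomial e 1 := by
  rw [monomial_mul, one_mul, h]

theorem neg_one_pow_mul_add_neg_one_pow_mul {R : Type*} [Ring R] {a b : ℕ}
    (h : Even a ↔ ¬Even b) (x : R) : (-1) ^ a * x + (-1) ^ b * x = 0 := by
  rw [neg_one_pow_congr (n := b + 1) (by rwa [Nat.even_add_one]), pow_succ, mul_neg_one,
    neg_mul, neg_add_cancel]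

theorem Finset.sum_sum_erase_eq_zero {ι M : Type*} [DecidableEq ι] [AddCommMonoid M]
    (s : Finset ι) (g : ι → ι → M)
    (h : ∀ x ∈ s, ∀ y ∈ s, x ≠ y → g x y + g y x = 0) :
    ∑ x ∈ s, ∑ y ∈ s.erase x, g x y = 0 := by
  rw [Finset.sum_sigma']
  refine Finset.sum_involution (fun p _ => ⟨p.2, p.1⟩) (fun p hp => ?_) (fun p hp _ => ?_)
    (fun p hp => ?_) (fun _ _ => rfl)
  all_goals obtain ⟨hx, hne, hy⟩ : p.1 ∈ s ∧ p.2 ≠ p.1 ∧ p.2 ∈ s := by simpa using hp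
  · exact h _ hx _ hy hne.symm
  · exact fun heq => hne (congrArg Sigma.fst heq)
  · simpa using ⟨hy, hne.symm, hx⟩

theorem Finset.sup_insert_le_add {ι α : Type*} [DecidableEq ι] [AddCommMonoid α]
    [SemilatticeSup α] [OrderBot α] [CanonicallyOrderedAdd α] (g : ι → α) (t : ι)
    (S : Finset ι) :
    (insert t S).sup g ≤ g t + S.sup g := by
  rw [Finset.sup_insert]
  exact sup_le le_self_add le_add_self

section TaylorEntries

variable {𝕜} {S : Finset (Fin r)} {s t : Fin r}

lemma taylorPos_le_card (hs : s ∈ S) : taylorPos S s ≤ S.card :=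
  Finset.card_lt_card (Finset.filter_ssubset.2 ⟨s, hs, lt_irrefl s⟩)

lemma taylorPos_erase_of_lt (hs : s ∈ S) (h : s < t) :
    taylorPos (S.erase s) t + 1 = taylorPos S t := by
  have hmem : s ∈ S.filter (· < t) := Finset.mem_filter.2 ⟨hs, h⟩
  rw [taylorPos, taylorPos, Finset.filter_erase, Finset.card_erase_add_one hmem]

lemma taylorPos_erase_of_le (h : t ≤ s) : taylorPos (S.erase s) t = taylorPos S t := by
  rw [taylorPos, taylorPos, Finset.filter_erase, Finset.erase_eq_of_notMem (by simp [h])]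

lemma taylorPos_insert_of_lt (hs : s ∉ S) (h : s < t) :
    taylorPos (insert s S) t = taylorPos S t + 1 := by
  rw [taylorPos, taylorPos, Finset.filter_insert, if_pos h,
    Finset.card_insert_of_notMem (by simp [hs])]

lemma taylorPos_insert_of_le (h : t ≤ s) : taylorPos (insert s S) t = taylorPos S t := by
  rw [taylorPos, taylorPos, Finset.filter_insert, if_neg (not_lt.2 h)]

variable (v : Fin r → (Fin n →₀ ℕ)) (f : Fin r → MvPolynomial (Fin n) 𝕜)

lemma taylorEntry_of_mem (hs : s ∈ S) :
    taylorEntry 𝕜 v S s =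
      (-1) ^ (S.card + taylorPos S s) * monomial (S.sup v - (S.erase s).sup v) 1 := by
  have hsign : Even (S.card - taylorPos S s) ↔ Even (S.card + taylorPos S s) := by
    rw [Nat.even_sub (taylorPos_le_card hs), Nat.even_add]
  rw [taylorEntry, neg_one_pow_congr hsign]

lemma taylorEntry_mul_taylorEntry {s' : Fin r} (hs : s ∈ S) (hs' : s' ∈ S.erase s) :
    taylorEntry 𝕜 v S s * taylorEntry 𝕜 v (S.erase s) s' =
      (-1) ^ (S.card + taylorPos S s + ((S.erase s).card + taylorPos (S.erase s) s')) *
        monomial (S.sup v - ((S.erase s).erase s').sup v) 1 := by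
  have hexp := tsub_add_tsub_cancel (Finset.sup_mono (f := v) (S.erase_subset s))
    (Finset.sup_mono (f := v) ((S.erase s).erase_subset s'))
  rw [taylorEntry_of_mem v hs, taylorEntry_of_mem v hs', ← monomial_one_mul_monomial_one hexp,
    pow_add]
  ring

lemma htpyEntry_mul_htpyEntry {t' : Fin r} :
    htpyEntry 𝕜 v f S t * htpyEntry 𝕜 v f (insert t S) t' =
      (-1) ^ (S.card + taylorPos S t + 1 + ((insert t S).card + taylorPos (insert t S) t' + 1)) *
        (f t * f t' * monomial (v t + v t' + S.sup v - (insert t' (insert t S)).sup v) 1) := by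
  have hexp := tsub_add_add_tsub_cancel (Finset.sup_insert_le_add v t S)
    (Finset.sup_insert_le_add v t' (insert t S))
  rw [add_right_comm (v t)] at hexp
  rw [htpyEntry, htpyEntry, ← monomial_one_mul_monomial_one hexp, pow_add]
  ring

lemma taylorEntry_mul_htpyEntry (hs : s ∈ S) :
    taylorEntry 𝕜 v S s * htpyEntry 𝕜 v f (S.erase s) t =
      (-1) ^ (S.card + taylorPos S s + ((S.erase s).card + taylorPos (S.erase s) t + 1)) *
        (f t * monomial (v t + S.sup v - (insert t (S.erase s)).sup v) 1) := by
  have hexp := tsub_add_add_tsub_cancel (Finset.sup_mono (f := v) (S.erase_subset s))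
    (Finset.sup_insert_le_add v t (S.erase s))
  rw [add_comm (S.sup v)] at hexp
  rw [taylorEntry_of_mem v hs, htpyEntry, ← monomial_one_mul_monomial_one hexp, pow_add]
  ring

lemma htpyEntry_mul_taylorEntry (hs : s ∈ insert t S) :
    htpyEntry 𝕜 v f S t * taylorEntry 𝕜 v (insert t S) s =
      (-1) ^ (S.card + taylorPos S t + 1 + ((insert t S).card + taylorPos (insert t S) s)) *
        (f t * monomial (v t + S.sup v - ((insert t S).erase s).sup v) 1) := by
  have hexp := tsub_add_tsub_cancel (Finset.sup_insert_le_add v t S)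
    (Finset.sup_mono (f := v) ((insert t S).erase_subset s))
  rw [htpyEntry, taylorEntry_of_mem v hs, ← monomial_one_mul_monomial_one hexp, pow_add]
  ring

lemma taylorEntry_mul_taylorEntry_add_swap {s' : Fin r} (hs : s ∈ S) (hs' : s' ∈ S)
    (hne : s ≠ s') :
    taylorEntry 𝕜 v S s * taylorEntry 𝕜 v (S.erase s) s'
      + taylorEntry 𝕜 v S s' * taylorEntry 𝕜 v (S.erase s') s = 0 := by
  wlog h : s < s' generalizing s s'
  · rw [add_comm]
    exact this hs' hs hne.symm (hne.lt_or_gt.resolve_left h)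
  rw [taylorEntry_mul_taylorEntry v hs (Finset.mem_erase.2 ⟨hne.symm, hs'⟩),
    taylorEntry_mul_taylorEntry v hs' (Finset.mem_erase.2 ⟨hne, hs⟩), Finset.erase_right_comm]
  have hcs := Finset.card_erase_add_one hs
  have hcs' := Finset.card_erase_add_one hs'
  -- removing `s` first moves `s'` down one position; removing `s'` first does not move `s`
  have hps' := taylorPos_erase_of_lt hs h
  have hps := taylorPos_erase_of_le (S := S) h.le
  exact neg_one_pow_mul_add_neg_one_pow_mul (by simp only [Nat.even_iff]; omega) _

lemma htpyEntry_mul_htpyEntry_add_swap {t' : Fin r} (ht : t ∉ S) (ht' : t' ∉ S)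
    (hne : t ≠ t') :
    htpyEntry 𝕜 v f S t * htpyEntry 𝕜 v f (insert t S) t'
      + htpyEntry 𝕜 v f S t' * htpyEntry 𝕜 v f (insert t' S) t = 0 := by
  wlog h : t < t' generalizing t t'
  · rw [add_comm]
    exact this ht' ht hne.symm (hne.lt_or_gt.resolve_left h)
  rw [htpyEntry_mul_htpyEntry, htpyEntry_mul_htpyEntry, Finset.insert_comm t' t,
    add_comm (v t'), mul_comm (f t')]
  have hct := Finset.card_insert_of_notMem ht
  have hct' := Finset.card_insert_of_notMem ht'
  have hpt' := taylorPos_insert_of_lt ht h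
  have hpt := taylorPos_insert_of_le (S := S) h.le
  exact neg_one_pow_mul_add_neg_one_pow_mul (by simp only [Nat.even_iff]; omega) _

lemma taylorEntry_mul_htpyEntry_add_htpyEntry_mul_taylorEntry (hs : s ∈ S) (ht : t ∉ S) :
    taylorEntry 𝕜 v S s * htpyEntry 𝕜 v f (S.erase s) t
      + htpyEntry 𝕜 v f S t * taylorEntry 𝕜 v (insert t S) s = 0 := by
  have hne : t ≠ s := fun h => ht (h ▸ hs)
  rw [taylorEntry_mul_htpyEntry v f hs,
    htpyEntry_mul_taylorEntry v f (Finset.mem_insert_of_mem hs), Finset.erase_insert_of_ne hne]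
  have hcs := Finset.card_erase_add_one hs
  have hct := Finset.card_insert_of_notMem ht
  rcases hne.lt_or_gt with h | h
  · have hpt := taylorPos_erase_of_le (S := S) h.le
    have hps := taylorPos_insert_of_lt ht h
    exact neg_one_pow_mul_add_neg_one_pow_mul (by simp only [Nat.even_iff]; omega) _
  · have hpt := taylorPos_erase_of_lt hs h
    have hps := taylorPos_insert_of_le (S := S) h.le
    exact neg_one_pow_mul_add_neg_one_pow_mul (by simp only [Nat.even_iff]; omega) _

lemma taylorEntry_mul_htpyEntry_erase_self (hs : s ∈ S) :
    taylorEntry 𝕜 v S s * htpyEntry 𝕜 v f (S.erase s) s = f s * monomial (v s) 1 := by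
  have hcs := Finset.card_erase_add_one hs
  have hps := taylorPos_erase_of_le (S := S) (le_refl s)
  rw [taylorEntry_mul_htpyEntry v f hs, Finset.insert_erase hs, add_tsub_cancel_right,
    Even.neg_one_pow (by simp only [Nat.even_iff]; omega), one_mul]

lemma htpyEntry_mul_taylorEntry_insert_self (ht : t ∉ S) :
    htpyEntry 𝕜 v f S t * taylorEntry 𝕜 v (insert t S) t = f t * monomial (v t) 1 := by
  have hct := Finset.card_insert_of_notMem ht
  have hpt := taylorPos_insert_of_le (S := S) (le_refl t)
  rw [htpyEntry_mul_taylorEntry v f (Finset.mem_insert_self t S), Finset.erase_insert ht,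
    add_tsub_cancel_right, Even.neg_one_pow (by simp only [Nat.even_iff]; omega), one_mul]

end TaylorEntries

section TaylorMaps

open Finsupp (single)

variable {𝕜} (v : Fin r → (Fin n →₀ ℕ)) (f : Fin r → MvPolynomial (Fin n) 𝕜)

lemma taylorTau_single (S : Finset (Fin r)) (c : MvPolynomial (Fin n) 𝕜) :
    taylorTau 𝕜 v (single S c) =
      ∑ s ∈ S, single (S.erase s) (c * taylorEntry 𝕜 v S s) := by
  simp only [taylorTau, Finsupp.lsum_single, LinearMap.toSpanSingleton_apply, Finset.smul_sum,
    Finsupp.smul_single, smul_eq_mul]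

lemma taylorHtpy_single (S : Finset (Fin r)) (c : MvPolynomial (Fin n) 𝕜) :
    taylorHtpy 𝕜 v f (single S c) =
      ∑ t ∈ Sᶜ, single (insert t S) (c * htpyEntry 𝕜 v f S t) := by
  simp only [taylorHtpy, Finsupp.lsum_single, LinearMap.toSpanSingleton_apply, Finset.smul_sum,
    Finsupp.smul_single, smul_eq_mul]

lemma taylorTau_comp_self : taylorTau 𝕜 v ∘ₗ taylorTau 𝕜 v = 0 := by
  refine Finsupp.lhom_ext' fun S => LinearMap.ext_ring ?_
  simp only [LinearMap.comp_apply, Finsupp.lsingle_apply, LinearMap.zero_apply, taylorTau_single,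
    map_sum, one_mul]
  refine Finset.sum_sum_erase_eq_zero S _ fun s hs s' hs' hne => ?_
  rw [Finset.erase_right_comm, ← Finsupp.single_add,
    taylorEntry_mul_taylorEntry_add_swap v hs hs' hne, Finsupp.single_zero]

lemma taylorHtpy_comp_self : taylorHtpy 𝕜 v f ∘ₗ taylorHtpy 𝕜 v f = 0 := by
  refine Finsupp.lhom_ext' fun S => LinearMap.ext_ring ?_
  simp only [LinearMap.comp_apply, Finsupp.lsingle_apply, LinearMap.zero_apply,
    taylorHtpy_single, map_sum, one_mul, Finset.compl_insert]
  refine Finset.sum_sum_erase_eq_zero Sᶜ _ fun t ht t' ht' hne => ?_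
  rw [Finset.insert_comm, ← Finsupp.single_add,
    htpyEntry_mul_htpyEntry_add_swap v f (Finset.mem_compl.1 ht) (Finset.mem_compl.1 ht') hne,
    Finsupp.single_zero]

lemma taylorTau_taylorHtpy_single (S : Finset (Fin r)) :
    taylorTau 𝕜 v (taylorHtpy 𝕜 v f (single S 1)) =
      ∑ t ∈ Sᶜ, (single S (f t * monomial (v t) 1) +
        ∑ s ∈ S, single ((insert t S).erase s)
          (htpyEntry 𝕜 v f S t * taylorEntry 𝕜 v (insert t S) s)) := by
  rw [taylorHtpy_single, map_sum]
  refine Finset.sum_congr rfl fun t ht => ?_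
  rw [Finset.mem_compl] at ht
  rw [one_mul, taylorTau_single, Finset.sum_insert ht, Finset.erase_insert ht,
    htpyEntry_mul_taylorEntry_insert_self v f ht]

lemma taylorHtpy_taylorTau_single (S : Finset (Fin r)) :
    taylorHtpy 𝕜 v f (taylorTau 𝕜 v (single S 1)) =
      ∑ s ∈ S, (single S (f s * monomial (v s) 1) +
        ∑ t ∈ Sᶜ, single (insert t (S.erase s))
          (taylorEntry 𝕜 v S s * htpyEntry 𝕜 v f (S.erase s) t)) := by
  rw [taylorTau_single, map_sum]
  refine Finset.sum_congr rfl fun s hs => ?_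
  rw [one_mul, taylorHtpy_single, Finset.compl_erase, Finset.sum_insert (by simp [hs]),
    Finset.insert_erase hs, taylorEntry_mul_htpyEntry_erase_self v f hs]

lemma taylorTau_comp_taylorHtpy_add_taylorHtpy_comp_taylorTau :
    taylorTau 𝕜 v ∘ₗ taylorHtpy 𝕜 v f + taylorHtpy 𝕜 v f ∘ₗ taylorTau 𝕜 v =
      (∑ j, f j * monomial (v j) 1) • LinearMap.id := by
  refine Finsupp.lhom_ext' fun S => LinearMap.ext_ring ?_
  simp only [LinearMap.comp_apply, LinearMap.add_apply, Finsupp.lsingle_apply,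
    LinearMap.smul_apply, LinearMap.id_apply, Finsupp.smul_single, smul_eq_mul, mul_one]
  rw [taylorTau_taylorHtpy_single, taylorHtpy_taylorTau_single, Finset.sum_add_distrib,
    Finset.sum_add_distrib, add_add_add_comm, ← Finsupp.single_finsetSum,
    ← Finsupp.single_finsetSum, ← Finsupp.single_add, Finset.sum_compl_add_sum, add_eq_left,
    Finset.sum_comm, ← Finset.sum_add_distrib]
  refine Finset.sum_eq_zero fun s hs => ?_
  rw [← Finset.sum_add_distrib]
  refine Finset.sum_eq_zero fun t ht => ?_
  rw [Finset.mem_compl] at ht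
  rw [Finset.erase_insert_of_ne (ne_of_mem_of_not_mem hs ht).symm, ← Finsupp.single_add,
    add_comm, taylorEntry_mul_htpyEntry_add_htpyEntry_mul_taylorEntry v f hs ht,
    Finsupp.single_zero]

lemma taylorTau_add_taylorHtpy_single_mem_span {P : Finset (Fin r) → Prop} (S : Finset (Fin r))
    (herase : ∀ s ∈ S, P (S.erase s)) (hinsert : ∀ t ∉ S, P (insert t S)) :
    (taylorTau 𝕜 v + taylorHtpy 𝕜 v f) (single S 1) ∈
      Submodule.span (MvPolynomial (Fin n) 𝕜)
        {x : TaylorModule 𝕜 n r | ∃ S' : Finset (Fin r), P S' ∧ x = single S' 1} := by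
  rw [LinearMap.add_apply, taylorTau_single, taylorHtpy_single]
  refine add_mem (Submodule.sum_mem _ fun s hs => ?_) (Submodule.sum_mem _ fun t ht => ?_) <;>
    rw [← Finsupp.smul_single_one] <;>
    refine Submodule.smul_mem _ _ (Submodule.subset_span ⟨_, ?_, rfl⟩)
  exacts [herase s hs, hinsert t (Finset.mem_compl.1 ht)]

end TaylorMaps

/-- In the hypersurface case `c = 1`, the endomorphism `D = τ + σ₁` of the
total Taylor module `T = ⊕_k T_k` satisfies `D² = a₁ · id_T`; moreover `D` exchanges the even
part `⊕_{|S| even} Q ε_S` and the odd part `⊕_{|S| odd} Q ε_S`, so the restrictions of `D`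
between the even and the odd part form a matrix factorization of `a₁`.
Here `m_j = x^{v j}` and `a₁ = Σ_j f_j m_j`. -/
theorem taylor_matrix_factorization {𝕜 : Type*} [Field 𝕜] {n r : ℕ}
    (v : Fin r → (Fin n →₀ ℕ)) (a : MvPolynomial (Fin n) 𝕜)
    (f : Fin r → MvPolynomial (Fin n) 𝕜)
    (ha : a = ∑ j : Fin r, f j * monomial (v j) 1) :
    ((taylorTau 𝕜 v + taylorHtpy 𝕜 v f) ∘ₗ (taylorTau 𝕜 v + taylorHtpy 𝕜 v f) =
      a • LinearMap.id) ∧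
    (∀ S : Finset (Fin r), Even S.card →
      (taylorTau 𝕜 v + taylorHtpy 𝕜 v f) (Finsupp.single S 1) ∈
        Submodule.span (MvPolynomial (Fin n) 𝕜)
          {x : TaylorModule 𝕜 n r |
            ∃ S' : Finset (Fin r), Odd S'.card ∧ x = Finsupp.single S' 1}) ∧
    (∀ S : Finset (Fin r), Odd S.card →
      (taylorTau 𝕜 v + taylorHtpy 𝕜 v f) (Finsupp.single S 1) ∈
        Submodule.span (MvPolynomial (Fin n) 𝕜)
          {x : TaylorModule 𝕜 n r |
            ∃ S' : Finset (Fin r), Even S'.card ∧ x = Finsupp.single S' 1}) := by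
  subst ha
  refine ⟨?_, fun S hS => ?_, fun S hS => ?_⟩
  · rw [LinearMap.comp_add, LinearMap.add_comp, LinearMap.add_comp, taylorTau_comp_self,
      taylorHtpy_comp_self, zero_add, add_zero, add_comm,
      taylorTau_comp_taylorHtpy_add_taylorHtpy_comp_taylorTau]
  · refine taylorTau_add_taylorHtpy_single_mem_span v f S (fun s hs => ?_) (fun t ht => ?_)
    · rw [Finset.card_erase_of_mem hs]
      exact Nat.Even.sub_odd (Finset.card_pos.2 ⟨s, hs⟩) hS odd_one
    · rw [Finset.card_insert_of_notMem ht]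
      exact hS.add_one
  · refine taylorTau_add_taylorHtpy_single_mem_span v f S (fun s hs => ?_) (fun t ht => ?_)
    · rw [Finset.card_erase_of_mem hs]
      exact Nat.Odd.sub_odd hS odd_one
    · rw [Finset.card_insert_of_notMem ht]
      exact hS.add_one
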